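/- A finite partial cube is strongly peripheral (i.e., W_ab and W_ba are peripheries for every edge ab) if and only if it is a hypercube. -/

import Mathlib

/-
Let `ab` be an edge of a strongly peripheral partial cube `G`. Every vertex of `W_ab` has a
neighbour in `W_ba`, and by convexity of the half-spaces (plus bipartiteness) this neighbour is
unique and lies one step further from every vertex of `W_ab`. Hence the edges between `W_ab` and
`W_ba` form a perfect matching which is an isomorphism `G[W_ab] ≅ G[W_ba]`, so
`G ≅ K₂ □ G[W_ab]`. The convex subgraph `G[W_ab]` is again a partial cube, and it is strongly
peripheral because a neighbour across the matching is further from both ends of any edge of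
`G[W_ab]`; induction on the number of vertices gives `G ≅ Q_n`. Conversely, for an edge `ab` of
`Q_n` in direction `i`, flipping coordinate `i` is an automorphism exchanging `a` and `b` and
moving every vertex to a neighbour, so it carries each vertex of `W_ab` along an edge into `W_ba`.
-/

open SimpleGraph

universe u

variable {V : Type u}

/-- The geodesic interval between two vertices: the set of vertices lying on
shortest paths between them. -/
def gInterval (G : SimpleGraph V) (x y : V) : Set V :=
  {z | G.dist x z + G.dist z y = G.dist x y}

/-- A set of vertices is (geodesically) convex. -/
def GConvex (G : SimpleGraph V) (C : Set V) : Prop :=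
  ∀ x ∈ C, ∀ y ∈ C, gInterval G x y ⊆ C

/-- `Wside G a b` is the set `W_ab` of vertices strictly closer to `a` than to `b`. -/
def Wside (G : SimpleGraph V) (a b : V) : Set V :=
  {x | G.dist a x < G.dist b x}

/-- `Uside G a b` is the set `U_ab` of vertices of `W_ab` having a neighbour in `W_ba`. -/
def Uside (G : SimpleGraph V) (a b : V) : Set V :=
  {x | x ∈ Wside G a b ∧ ∃ y, G.Adj x y ∧ y ∈ Wside G b a}

/-- A graph is bipartite if it admits a proper 2-colouring. -/
def IsBipartiteGraph (G : SimpleGraph V) : Prop :=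
  ∃ c : V → Bool, ∀ u v, G.Adj u v → c u ≠ c v

/-- A partial cube: a connected bipartite graph all of whose half-spaces `W_ab`, `W_ba`
are convex (Djoković's characterization). -/
def IsPartialCube (G : SimpleGraph V) : Prop :=
  G.Connected ∧ IsBipartiteGraph G ∧
    ∀ a b, G.Adj a b → GConvex G (Wside G a b) ∧ GConvex G (Wside G b a)

/-- The Djoković–Winkler relation Θ between (unordered) edges. -/
def ThetaRel (G : SimpleGraph V) (e f : Sym2 V) : Prop :=
  ∃ x y u v : V, e = s(x, y) ∧ f = s(u, v) ∧
    G.dist x u + G.dist y v ≠ G.dist x v + G.dist y u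

/-- The geodesic convex hull of a set of vertices. -/
def gConvexHull (G : SimpleGraph V) (A : Set V) : Set V :=
  ⋂₀ {C : Set V | GConvex G C ∧ A ⊆ C}

/-- The hypercube of dimension `n`: vertices are functions `Fin n → Bool`,
adjacent iff they differ in exactly one coordinate. -/
def cubeGraph (n : ℕ) : SimpleGraph (Fin n → Bool) where
  Adj x y := ∃! i, x i ≠ y i
  symm := by
    constructor
    rintro x y ⟨i, hi, hu⟩
    exact ⟨i, hi.symm, fun j hj => hu j hj.symm⟩
  loopless := by
    constructor
    rintro x ⟨i, hi, -⟩
    exact hi rfl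
theorem SimpleGraph.Hom.dist_map_le {W : Type*} {G : SimpleGraph V} {H : SimpleGraph W}
    (φ : G →g H) {u v : V} (h : G.Reachable u v) : H.dist (φ u) (φ v) ≤ G.dist u v := by
  obtain ⟨p, hp⟩ := h.exists_walk_length_eq_dist
  simpa [hp] using dist_le (p.map φ)

theorem SimpleGraph.Iso.dist_map {W : Type*} {G : SimpleGraph V} {H : SimpleGraph W}
    (φ : G ≃g H) (u v : V) : H.dist (φ u) (φ v) = G.dist u v := by
  by_cases h : G.Reachable u v
  · refine le_antisymm (φ.toHom.dist_map_le h) ?_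
    simpa using φ.symm.toHom.dist_map_le (Iso.reachable_iff.mpr h : H.Reachable (φ u) (φ v))
  · rw [dist_eq_zero_of_not_reachable h,
      dist_eq_zero_of_not_reachable (mt Iso.reachable_iff.mp h)]

theorem SimpleGraph.Walk.mem_gInterval_of_length_eq_dist {G : SimpleGraph V} {u v z : V}
    (p : G.Walk u v) (hp : p.length = G.dist u v) (hz : z ∈ p.support) :
    z ∈ gInterval G u v := by
  classical
  have hlen := congrArg Walk.length (p.take_spec hz)
  rw [Walk.length_append] at hlen
  have h₁ := dist_le (p.takeUntil z hz)
  have h₂ := dist_le (p.dropUntil z hz)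
  have h₃ := (p.takeUntil z hz).reachable.dist_triangle_left v
  simp only [gInterval, Set.mem_ofPred_eq]
  omega

theorem Uside_subset_Wside (G : SimpleGraph V) (a b : V) : Uside G a b ⊆ Wside G a b :=
  fun _ hx => hx.1

theorem left_mem_Wside {G : SimpleGraph V} {a b : V} (hab : G.Adj a b) : a ∈ Wside G a b := by
  simp [Wside, dist_eq_one_iff_adj.mpr hab.symm]

theorem right_notMem_Wside (G : SimpleGraph V) (a b : V) : b ∉ Wside G a b := by
  simp [Wside]

def IsStronglyPeripheral (G : SimpleGraph V) : Prop :=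
  ∀ a b, G.Adj a b → Wside G a b ⊆ Uside G a b

theorem isStronglyPeripheral_iff {G : SimpleGraph V} : IsStronglyPeripheral G ↔
    ∀ a b, G.Adj a b → Wside G a b = Uside G a b ∧ Wside G b a = Uside G b a := by
  refine ⟨fun h a b hab => ⟨?_, ?_⟩, fun h a b hab => (h a b hab).1.subset⟩
  · exact (h a b hab).antisymm (Uside_subset_Wside G a b)
  · exact (h b a hab.symm).antisymm (Uside_subset_Wside G b a)

theorem SimpleGraph.Iso.preimage_Wside {W : Type*} {G : SimpleGraph V} {H : SimpleGraph W}
    (φ : G ≃g H) (a b : V) : φ ⁻¹' Wside H (φ a) (φ b) = Wside G a b := by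
  ext x
  simp only [Wside, Set.mem_preimage, Set.mem_ofPred_eq, φ.dist_map]

theorem IsStronglyPeripheral.of_iso {W : Type*} {G : SimpleGraph V} {H : SimpleGraph W}
    (hH : IsStronglyPeripheral H) (φ : G ≃g H) : IsStronglyPeripheral G := by
  intro a b hab x hx
  rw [← φ.preimage_Wside] at hx
  obtain ⟨-, y, hxy, hy⟩ := hH _ _ (φ.map_adj_iff.mpr hab) hx
  refine ⟨φ.preimage_Wside a b ▸ hx, φ.symm y, ?_, ?_⟩
  · simpa using φ.symm.map_adj_iff.mpr hxy
  · rw [← φ.preimage_Wside, Set.mem_preimage, φ.apply_symm_apply]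
    exact hy

theorem Wside_subset_Uside_of_swap {G : SimpleGraph V} {a b : V} (σ : G ≃g G) (ha : σ a = b)
    (hb : σ b = a) (hσ : ∀ x, G.Adj x (σ x)) : Wside G a b ⊆ Uside G a b := by
  intro x hx
  refine ⟨hx, σ x, hσ x, ?_⟩
  rwa [← σ.preimage_Wside, Set.mem_preimage, ha, hb] at hx

@[simp]
theorem cubeGraph_adj {n : ℕ} {x y : Fin n → Bool} :
    (cubeGraph n).Adj x y ↔ ∃! i, x i ≠ y i :=
  Iff.rfl

def cubeFlip {n : ℕ} (i : Fin n) : cubeGraph n ≃g cubeGraph n where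
  toEquiv := Function.Involutive.toPerm (fun x => Function.update x i (!x i)) fun x => by simp
  map_rel_iff' {x y} := by
    change (∃! j, Function.update x i (!x i) j ≠ Function.update y i (!y i) j) ↔ _
    refine existsUnique_congr fun j => ?_
    by_cases hj : j = i <;> simp [hj]

theorem cubeFlip_apply {n : ℕ} (i : Fin n) (x : Fin n → Bool) :
    cubeFlip i x = Function.update x i (!x i) :=
  rfl

theorem cubeFlip_cubeFlip {n : ℕ} (i : Fin n) (x : Fin n → Bool) :
    cubeFlip i (cubeFlip i x) = x := by
  simp [cubeFlip_apply]

theorem cubeGraph_adj_cubeFlip {n : ℕ} (x : Fin n → Bool) (i : Fin n) :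
    (cubeGraph n).Adj x (cubeFlip i x) := by
  refine ⟨i, by simp [cubeFlip_apply], fun j hj => ?_⟩
  by_contra hji
  simp [cubeFlip_apply, hji] at hj

theorem exists_cubeFlip_eq_of_adj {n : ℕ} {x y : Fin n → Bool} (h : (cubeGraph n).Adj x y) :
    ∃ i, cubeFlip i x = y := by
  obtain ⟨i, hi, huniq⟩ := h
  refine ⟨i, funext fun j => ?_⟩
  by_cases hj : j = i
  · subst hj
    simp only [cubeFlip_apply, Function.update_self]
    exact (Bool.eq_not.mpr hi.symm).symm
  · simp only [cubeFlip_apply, Function.update_of_ne hj]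
    exact not_not.mp (mt (huniq j) hj)

theorem isStronglyPeripheral_cubeGraph (n : ℕ) : IsStronglyPeripheral (cubeGraph n) := by
  intro a b hab
  obtain ⟨i, rfl⟩ := exists_cubeFlip_eq_of_adj hab
  exact Wside_subset_Uside_of_swap (cubeFlip i) rfl (cubeFlip_cubeFlip i a)
    (cubeGraph_adj_cubeFlip · i)

theorem SimpleGraph.Walk.length_induce {G : SimpleGraph V} {s : Set V} {u v : V}
    (p : G.Walk u v) (hp : ∀ x ∈ p.support, x ∈ s) : (p.induce s hp).length = p.length := by
  induction p <;> simp [*]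

section ConvexInduce

variable {G : SimpleGraph V} {s : Set V}

theorem GConvex.exists_walk_induce (hconn : G.Connected) (hs : GConvex G s) (u v : s) :
    ∃ q : (G.induce s).Walk u v, q.length = G.dist u v := by
  obtain ⟨p, hp⟩ := (hconn u v).exists_walk_length_eq_dist
  have hsupp : ∀ z ∈ p.support, z ∈ s := fun z hz =>
    hs u u.2 v v.2 (p.mem_gInterval_of_length_eq_dist hp hz)
  exact ⟨p.induce s hsupp, (p.length_induce hsupp).trans hp⟩

theorem GConvex.dist_induce (hconn : G.Connected) (hs : GConvex G s) (u v : s) :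
    (G.induce s).dist u v = G.dist u v := by
  obtain ⟨q, hq⟩ := hs.exists_walk_induce hconn u v
  exact le_antisymm (hq ▸ dist_le q) ((Embedding.induce s).toHom.dist_map_le ⟨q⟩)

theorem GConvex.induce_connected (hconn : G.Connected) (hs : GConvex G s) (hne : s.Nonempty) :
    (G.induce s).Connected := by
  have : Nonempty s := hne.to_subtype
  exact Connected.mk fun u v => ⟨(hs.exists_walk_induce hconn u v).choose⟩

theorem GConvex.Wside_induce (hconn : G.Connected) (hs : GConvex G s) (a b : s) :
    Wside (G.induce s) a b = Subtype.val ⁻¹' Wside G a b := by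
  ext x
  simp only [Wside, Set.mem_preimage, Set.mem_ofPred_eq, hs.dist_induce hconn]

theorem GConvex.preimage_val_induce (hconn : G.Connected) (hs : GConvex G s) {C : Set V}
    (hC : GConvex G C) : GConvex (G.induce s) (Subtype.val ⁻¹' C) := by
  intro x hx y hy z hz
  simp only [gInterval, Set.mem_ofPred_eq, hs.dist_induce hconn] at hz
  exact hC x hx y hy hz

theorem IsPartialCube.induce (hG : IsPartialCube G) (hs : GConvex G s) (hne : s.Nonempty) :
    IsPartialCube (G.induce s) := by
  obtain ⟨hconn, ⟨c, hc⟩, hW⟩ := hG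
  refine ⟨hs.induce_connected hconn hne, ⟨c ∘ Subtype.val, fun u v h => hc u v h⟩,
    fun a b hab => ?_⟩
  rw [hs.Wside_induce hconn, hs.Wside_induce hconn]
  exact ⟨hs.preimage_val_induce hconn (hW a b hab).1,
    hs.preimage_val_induce hconn (hW a b hab).2⟩

end ConvexInduce

section Crossing

variable {G : SimpleGraph V} {a b u x y : V}

theorem IsPartialCube.gConvex_Wside (hG : IsPartialCube G) (hab : G.Adj a b) :
    GConvex G (Wside G a b) :=
  (hG.2.2 a b hab).1

theorem IsBipartiteGraph.dist_ne_of_adj (hbip : IsBipartiteGraph G) (hconn : G.Connected)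
    (hab : G.Adj a b) (x : V) : G.dist a x ≠ G.dist b x := by
  obtain ⟨c, hc⟩ := hbip
  let col : G.Coloring Bool := Coloring.mk c fun h => hc _ _ h
  obtain ⟨p, hp⟩ := (hconn a x).exists_walk_length_eq_dist
  obtain ⟨q, hq⟩ := (hconn b x).exists_walk_length_eq_dist
  have hparity :=
    (col.even_length_iff_congr p).trans (col.even_length_iff_congr (q.cons hab)).symm
  rw [Walk.length_cons, hp, hq, Nat.even_add_one] at hparity
  intro h
  rw [h] at hparity
  exact (iff_not_self hparity).elim

theorem IsPartialCube.mem_Wside_swap_iff (hG : IsPartialCube G) (hab : G.Adj a b) :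
    x ∈ Wside G b a ↔ x ∉ Wside G a b := by
  have := hG.2.1.dist_ne_of_adj hG.1 hab x
  simp only [Wside, Set.mem_ofPred_eq]
  omega

theorem IsPartialCube.dist_eq_add_one_of_cross (hG : IsPartialCube G) (hab : G.Adj a b)
    (hu : u ∈ Wside G a b) (hx : x ∈ Wside G a b) (hy : y ∈ Wside G b a) (hxy : G.Adj x y) :
    G.dist u y = G.dist u x + 1 := by
  have hne := hG.2.1.dist_ne_of_adj hG.1 hxy u
  rw [dist_comm, dist_comm (u := y)] at hne
  rcases hxy.diff_dist_adj (u := u) with h | h | h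
  · exact absurd h.symm hne
  · exact h
  · have hyx : y ∈ gInterval G u x := by
      simp only [gInterval, Set.mem_ofPred_eq, dist_eq_one_iff_adj.mpr hxy.symm]
      omega
    exact absurd (hG.gConvex_Wside hab u hu x hx hyx) ((hG.mem_Wside_swap_iff hab).mp hy)

theorem IsPartialCube.eq_of_cross (hG : IsPartialCube G) (hab : G.Adj a b) {y' : V}
    (hx : x ∈ Wside G a b) (hy : y ∈ Wside G b a) (hy' : y' ∈ Wside G b a)
    (hxy : G.Adj x y) (hxy' : G.Adj x y') : y = y' := by
  have := hG.dist_eq_add_one_of_cross hab.symm hy hy' hx hxy'.symm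
  rw [dist_eq_one_iff_adj.mpr hxy.symm] at this
  exact hG.1.dist_eq_zero_iff.mp (by omega)

theorem IsPartialCube.adj_of_cross (hG : IsPartialCube G) (hab : G.Adj a b) {x' y' : V}
    (hx : x ∈ Wside G a b) (hy : y ∈ Wside G a b) (hx' : x' ∈ Wside G b a)
    (hy' : y' ∈ Wside G b a) (hxx' : G.Adj x x') (hyy' : G.Adj y y') (hxy : G.Adj x y) :
    G.Adj x' y' := by
  have h₁ := hG.dist_eq_add_one_of_cross hab hy hx hx' hxx'
  have h₂ := hG.dist_eq_add_one_of_cross hab.symm hx' hy' hy hyy'.symm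
  rw [dist_comm, dist_eq_one_iff_adj.mpr hxy.symm] at h₁
  rw [← dist_eq_one_iff_adj]
  omega

end Crossing

theorem IsStronglyPeripheral.induce_Wside {G : SimpleGraph V} {a b : V}
    (hP : IsStronglyPeripheral G) (hG : IsPartialCube G) (hab : G.Adj a b) :
    IsStronglyPeripheral (G.induce (Wside G a b)) := by
  intro a' b' hab' x hx
  have hconv := hG.gConvex_Wside hab
  rw [hconv.Wside_induce hG.1] at hx
  obtain ⟨-, y, hxy, hy⟩ := hP a' b' (induce_adj.mp hab') hx
  have hys : y ∈ Wside G a b := by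
    by_contra hys
    have hy_ba := (hG.mem_Wside_swap_iff hab).mpr hys
    have ha' := hG.dist_eq_add_one_of_cross hab a'.2 x.2 hy_ba hxy
    have hb' := hG.dist_eq_add_one_of_cross hab b'.2 x.2 hy_ba hxy
    have hx' : G.dist a' x < G.dist b' x := hx
    have hy' : G.dist b' y < G.dist a' y := hy
    omega
  refine ⟨by rwa [hconv.Wside_induce hG.1], ⟨y, hys⟩, hxy, ?_⟩
  rwa [hconv.Wside_induce hG.1]

/-- `f` is a perfect matching between `s` and its complement along which `G[s] ≅ G[sᶜ]`,
i.e. `G` is the prism over `G[s]`. -/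
structure IsPrismMatching (G : SimpleGraph V) (s : Set V) (f : V → V) : Prop where
  adj_apply : ∀ x, G.Adj x (f x)
  apply_mem_iff : ∀ x, f x ∈ s ↔ x ∉ s
  eq_apply_of_adj : ∀ x y, G.Adj x y → (y ∈ s ↔ x ∉ s) → y = f x
  adj_apply_apply : ∀ x y, G.Adj x y → (y ∈ s ↔ x ∈ s) → G.Adj (f x) (f y)

namespace IsPrismMatching

variable {G : SimpleGraph V} {s : Set V} {f : V → V}

theorem apply_apply (hf : IsPrismMatching G s f) (x : V) : f (f x) = x :=
  (hf.eq_apply_of_adj (f x) x (hf.adj_apply x).symm (by rw [hf.apply_mem_iff, not_not])).symm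

def isoBoxProd [DecidablePred (· ∈ s)] (hf : IsPrismMatching G s f) :
    G ≃g (⊤ : SimpleGraph Bool).boxProd (G.induce s) where
  toFun x :=
    if hx : x ∈ s then (false, ⟨x, hx⟩) else (true, ⟨f x, (hf.apply_mem_iff x).mpr hx⟩)
  invFun p := if p.1 then f p.2 else p.2
  left_inv x := by
    by_cases hx : x ∈ s <;> simp [hx, hf.apply_apply]
  right_inv := by
    rintro ⟨_ | _, z, hz⟩
    · simp [hz]
    · simp [(hf.apply_mem_iff z).not_left.mpr hz, hf.apply_apply]
  map_rel_iff' {x y} := by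
    have hfx := hf.apply_mem_iff x
    have hfy := hf.apply_mem_iff y
    by_cases hx : x ∈ s <;> by_cases hy : y ∈ s <;>
      simp only [Equiv.coe_fn_mk, hx, hy, dite_true, dite_false, boxProd_adj, top_adj,
        Subtype.mk.injEq, induce_adj, ne_eq, not_true_eq_false, Bool.false_eq_true,
        Bool.true_eq_false, not_false_eq_true, false_and, true_and, and_true, and_false,
        or_false, false_or]
    · exact ⟨fun h => h ▸ (hf.adj_apply y).symm,
        fun h => hf.eq_apply_of_adj y x h.symm (by simp [hx, hy])⟩
    · exact ⟨fun h => h ▸ hf.adj_apply x,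
        fun h => (hf.eq_apply_of_adj x y h (by simp [hx, hy])).symm⟩
    · refine ⟨fun h => ?_, fun h => hf.adj_apply_apply x y h (by simp [hx, hy])⟩
      simpa [hf.apply_apply] using hf.adj_apply_apply _ _ h (by simp [hfx, hfy, hx, hy])

end IsPrismMatching

theorem IsPartialCube.exists_isPrismMatching {G : SimpleGraph V} {a b : V}
    (hG : IsPartialCube G) (hP : IsStronglyPeripheral G) (hab : G.Adj a b) :
    ∃ f, IsPrismMatching G (Wside G a b) f := by
  have hswap (z : V) := hG.mem_Wside_swap_iff hab (x := z)
  have hcross (x : V) : ∃ y, G.Adj x y ∧ (y ∈ Wside G a b ↔ x ∉ Wside G a b) := by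
    by_cases hx : x ∈ Wside G a b
    · obtain ⟨-, y, hxy, hy⟩ := hP a b hab hx
      exact ⟨y, hxy, by simp [hx, (hswap y).mp hy]⟩
    · obtain ⟨-, y, hxy, hy⟩ := hP b a hab.symm ((hswap x).mpr hx)
      exact ⟨y, hxy, by simp [hx, hy]⟩
  choose f hadj hmem using hcross
  refine ⟨f, hadj, hmem, fun x y hxy hy => ?_, fun x y hxy hy => ?_⟩
  · by_cases hx : x ∈ Wside G a b
    · exact hG.eq_of_cross hab hx ((hswap y).mpr (hy.not_left.mpr hx))
        ((hswap _).mpr ((hmem x).not_left.mpr hx)) hxy (hadj x)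
    · exact hG.eq_of_cross hab.symm ((hswap x).mpr hx) (hy.mpr hx) ((hmem x).mpr hx) hxy
        (hadj x)
  · by_cases hx : x ∈ Wside G a b
    · exact hG.adj_of_cross hab hx (hy.mpr hx) ((hswap _).mpr ((hmem x).not_left.mpr hx))
        ((hswap _).mpr ((hmem y).not_left.mpr (hy.mpr hx))) (hadj x) (hadj y) hxy
    · exact hG.adj_of_cross hab.symm ((hswap x).mpr hx) ((hswap y).mpr (hy.not.mpr hx))
        ((hmem x).mpr hx) ((hmem y).mpr (hy.not.mpr hx)) (hadj x) (hadj y) hxy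

theorem Fin.existsUnique_succ_iff {n : ℕ} {p : Fin (n + 1) → Prop} :
    (∃! i, p i) ↔
      (p 0 ∧ ∀ j : Fin n, ¬p j.succ) ∨ (¬p 0 ∧ ∃! j : Fin n, p j.succ) := by
  constructor
  · rintro ⟨i, hi, huniq⟩
    cases i using Fin.cases with
    | zero => exact .inl ⟨hi, fun j hj => Fin.succ_ne_zero j (huniq _ hj)⟩
    | succ k => exact .inr ⟨fun h0 => Fin.succ_ne_zero k (huniq 0 h0).symm, k, hi,
        fun j hj => Fin.succ_injective _ (huniq _ hj)⟩
  · rintro (⟨h0, hs⟩ | ⟨h0, k, hk, huniq⟩)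
    · refine ⟨0, h0, fun j hj => ?_⟩
      cases j using Fin.cases with
      | zero => rfl
      | succ m => exact (hs m hj).elim
    · refine ⟨k.succ, hk, fun j hj => ?_⟩
      cases j using Fin.cases with
      | zero => exact (h0 hj).elim
      | succ m => exact congrArg Fin.succ (huniq m hj)

def SimpleGraph.Iso.boxProd {α α' β β' : Type*} {G : SimpleGraph α} {G' : SimpleGraph α'}
    {H : SimpleGraph β} {H' : SimpleGraph β'} (φ : G ≃g G') (ψ : H ≃g H') :
    G.boxProd H ≃g G'.boxProd H' where
  toEquiv := φ.toEquiv.prodCongr ψ.toEquiv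
  map_rel_iff' := by simp [boxProd_adj, Iso.map_adj_iff]

def cubeGraphSuccIso (n : ℕ) :
    (⊤ : SimpleGraph Bool).boxProd (cubeGraph n) ≃g cubeGraph (n + 1) where
  toEquiv := Fin.consEquiv fun _ => Bool
  map_rel_iff' {x y} := by
    obtain ⟨a, x⟩ := x
    obtain ⟨b, y⟩ := y
    simp [Fin.existsUnique_succ_iff, boxProd_adj, funext_iff, and_comm]

theorem IsPartialCube.exists_iso_cubeGraph [Finite V] {G : SimpleGraph V}
    (hG : IsPartialCube G) (hP : IsStronglyPeripheral G) :
    ∃ n : ℕ, Nonempty (G ≃g cubeGraph n) := by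
  refine Finite.induction_subsingleton_or_nontrivial
    (P := fun V => ∀ G : SimpleGraph V, IsPartialCube G → IsStronglyPeripheral G →
      ∃ n : ℕ, Nonempty (G ≃g cubeGraph n)) V ?_ ?_ G hG hP
  · intro V _ _ G hG _
    have : Unique V := uniqueOfSubsingleton hG.1.nonempty.some
    refine ⟨0, ⟨⟨Equiv.ofUnique V (Fin 0 → Bool), fun {x y} => ?_⟩⟩⟩
    simp [Subsingleton.elim x y]
  · intro V _ _ ih G hG hP
    classical
    obtain ⟨a⟩ := hG.1.nonempty
    obtain ⟨b, hab⟩ := hG.1.preconnected.exists_adj_of_nontrivial a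
    obtain ⟨f, hf⟩ := hG.exists_isPrismMatching hP hab
    obtain ⟨n, ⟨φ⟩⟩ := ih (Wside G a b) (Finite.card_subtype_lt (right_notMem_Wside G a b))
      _ (hG.induce (hG.gConvex_Wside hab) ⟨a, left_mem_Wside hab⟩) (hP.induce_Wside hG hab)
    exact ⟨n + 1, ⟨hf.isoBoxProd.trans ((Iso.refl.boxProd φ).trans (cubeGraphSuccIso n))⟩⟩

/-- A finite partial cube is strongly peripheral iff it is a hypercube. -/
theorem stmt_13 (G : SimpleGraph V) [Fintype V] (hG : IsPartialCube G) :
    (∀ a b, G.Adj a b →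
        Wside G a b = Uside G a b ∧ Wside G b a = Uside G b a) ↔
      ∃ n : ℕ, Nonempty (G ≃g cubeGraph n) := by
  rw [← isStronglyPeripheral_iff]
  refine ⟨hG.exists_iso_cubeGraph, ?_⟩
  rintro ⟨n, ⟨φ⟩⟩
  exact (isStronglyPeripheral_cubeGraph n).of_iso φ
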